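/- arXiv:1503.06647 — 9 statements merged into one kernel-verified Lean document; each statement's English description precedes it below -/
import Mathlib

section
/- Chu connections compose: if (u,v) is a Chu connection from f to g and (u',v') is a Chu connection from g to h in a unital quantale Q, then (u' * u, v' * v) is a Chu connection from f to h. That is, if f ↙ u = v ↘ g and g ↙ u' = v' ↘ h, then f ↙ (u' * u) = (v' * v) ↘ h. -/
/-- Chu connections in a unital quantale compose. -/
theorem chuConnection_comp {Q : Type*} [CompleteLattice Q] [Monoid Q]
    (limp rimp : Q → Q → Q)
    (hlimp : ∀ f g h : Q, g * f ≤ h ↔ g ≤ limp h f)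
    (hrimp : ∀ f g h : Q, g * f ≤ h ↔ f ≤ rimp g h)
    (f g h u v u' v' : Q)
    (hc₁ : limp f u = rimp v g) (hc₂ : limp g u' = rimp v' h) :
    limp f (u' * u) = rimp (v' * v) h := by
  have key : ∀ x : Q, x ≤ limp f (u' * u) ↔ x ≤ rimp (v' * v) h := by
    intro x
    rw [← hlimp, ← mul_assoc, hlimp, hc₁, ← hrimp, ← mul_assoc,
      hlimp, hc₂, ← hrimp, ← mul_assoc, hrimp]
  exact le_antisymm ((key _).mp le_rfl) ((key _).mpr le_rfl)
end

section
/- Joins of Chu connections are Chu connections: if (uᵢ, vᵢ) are Chu connections from f to g for all i in an index set I (i.e., f ↙ uᵢ = vᵢ ↘ g for each i), then (⋁ᵢ uᵢ, ⋁ᵢ vᵢ) is a Chu connection from f to g. -/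
/-- Joins of Chu connections in a unital quantale are Chu connections. -/
theorem chuConnection_iSup {Q : Type*} [CompleteLattice Q] [Monoid Q]
    (limp rimp : Q → Q → Q)
    (hlimp : ∀ f g h : Q, g * f ≤ h ↔ g ≤ limp h f)
    (hrimp : ∀ f g h : Q, g * f ≤ h ↔ f ≤ rimp g h)
    {ι : Type*} (f g : Q) (u v : ι → Q)
    (hc : ∀ i : ι, limp f (u i) = rimp (v i) g) :
    limp f (⨆ i, u i) = rimp (⨆ i, v i) g := by
  apply le_antisymm
  · set L := limp f (⨆ i, u i) with hL
    have hLu : L * (⨆ i, u i) ≤ f := (hlimp _ _ _).mpr le_rfl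
    have hstep : ∀ i, L ≤ limp f (u i) := fun i =>
      (hlimp _ _ _).mp ((hrimp _ _ _).mpr (le_trans (le_iSup u i) ((hrimp _ _ _).mp hLu)))
    have hvi : ∀ i, v i ≤ limp g L := fun i =>
      (hlimp _ _ _).mp ((hrimp _ _ _).mpr ((hc i ▸ hstep i)))
    exact (hrimp _ _ _).mp ((hlimp _ _ _).mpr (iSup_le hvi))
  · set R := rimp (⨆ i, v i) g with hR
    have hvR : (⨆ i, v i) * R ≤ g := (hrimp _ _ _).mpr le_rfl
    have hstep : ∀ i, R ≤ rimp (v i) g := fun i =>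
      (hrimp _ _ _).mp ((hlimp _ _ _).mpr (le_trans (le_iSup v i) ((hlimp _ _ _).mp hvR)))
    have hui : ∀ i, u i ≤ rimp R f := fun i =>
      (hrimp _ _ _).mp ((hlimp _ _ _).mpr ((hc i) ▸ hstep i))
    exact (hlimp _ _ _).mp ((hrimp _ _ _).mpr (iSup_le hui))
end

section
/- The equivalence relation on Chu connections given by equal back diagonals is a congruence for composition: if (u₁,v₁) and (u₁',v₁') are Chu connections f → g with f ↙ u₁ = f ↙ u₁', and (u₂,v₂), (u₂',v₂') are Chu connections g → h with g ↙ u₂ = g ↙ u₂', then f ↙ (u₂ * u₁) = (v₂' * v₁') ↘ h; in particular f ↙ (u₂ * u₁) = f ↙ (u₂' * u₁'). -/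
/-- Equality of back diagonals is a congruence for composition of Chu connections. -/
theorem chuConnection_congruence {Q : Type*} [CompleteLattice Q] [Monoid Q]
    (limp rimp : Q → Q → Q)
    (hlimp : ∀ f g h : Q, g * f ≤ h ↔ g ≤ limp h f)
    (hrimp : ∀ f g h : Q, g * f ≤ h ↔ f ≤ rimp g h)
    (f g h u₁ v₁ u₁' v₁' u₂ v₂ u₂' v₂' : Q)
    (hc₁ : limp f u₁ = rimp v₁ g) (hc₁' : limp f u₁' = rimp v₁' g)
    (hc₂ : limp g u₂ = rimp v₂ h) (hc₂' : limp g u₂' = rimp v₂' h)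
    (he₁ : limp f u₁ = limp f u₁') (he₂ : limp g u₂ = limp g u₂') :
    limp f (u₂ * u₁) = rimp (v₂' * v₁') h ∧ limp f (u₂ * u₁) = limp f (u₂' * u₁') := by
  have key : ∀ a b a' b' : Q, limp f a = rimp a' g → limp g b = rimp b' h →
      limp f (b * a) = rimp (b' * a') h := by
    intro a b a' b' h1 h2
    have iff : ∀ x : Q, x ≤ limp f (b * a) ↔ x ≤ rimp (b' * a') h := by
      intro x
      calc x ≤ limp f (b * a) ↔ x * (b * a) ≤ f := (hlimp _ _ _).symm
        _ ↔ x * b * a ≤ f := by rw [mul_assoc]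
        _ ↔ x * b ≤ limp f a := hlimp _ _ _
        _ ↔ x * b ≤ rimp a' g := by rw [h1]
        _ ↔ a' * (x * b) ≤ g := (hrimp _ _ _).symm
        _ ↔ a' * x * b ≤ g := by rw [mul_assoc]
        _ ↔ a' * x ≤ limp g b := hlimp _ _ _
        _ ↔ a' * x ≤ rimp b' h := by rw [h2]
        _ ↔ b' * (a' * x) ≤ h := (hrimp _ _ _).symm
        _ ↔ b' * a' * x ≤ h := by rw [mul_assoc]
        _ ↔ x ≤ rimp (b' * a') h := hrimp _ _ _
    exact le_antisymm ((iff _).1 le_rfl) ((iff _).2 le_rfl)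
  have k1 := key u₁ u₂ v₁' v₂' (he₁.trans hc₁') (he₂.trans hc₂')
  have k2 := key u₁' u₂' v₁' v₂' hc₁' hc₂'
  exact ⟨k1, k1.trans k2.symm⟩
end

section
/- For a Chu connection (u,v) from f to g in a unital quantale, the pair σ(u,v) := ((f ↙ u) ↘ f, g ↙ (v ↘ g)) satisfies: (f ↙ u) ↘ f = (v ↘ g) ↘ f and g ↙ (v ↘ g) = g ↙ (f ↙ u); moreover σ(u,v) is again a Chu connection from f to g equivalent to (u,v), i.e., f ↙ ((f ↙ u) ↘ f) = f ↙ u. -/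
/-- Description of the nucleus `σ` on Chu connections in a unital quantale:
`σ(u,v) = ((f ↙ u) ↘ f, g ↙ (v ↘ g))` is a closed Chu connection equivalent to `(u,v)`. -/
theorem chuConnection_sigma {Q : Type*} [CompleteLattice Q] [Monoid Q]
    (limp rimp : Q → Q → Q)
    (hlimp : ∀ f g h : Q, g * f ≤ h ↔ g ≤ limp h f)
    (hrimp : ∀ f g h : Q, g * f ≤ h ↔ f ≤ rimp g h)
    (f g u v : Q) (hc : limp f u = rimp v g) :
    rimp (limp f u) f = rimp (rimp v g) f ∧
    limp g (rimp v g) = limp g (limp f u) ∧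
    limp f (rimp (limp f u) f) = rimp (limp g (rimp v g)) g ∧
    limp f (rimp (limp f u) f) = limp f u := by
  -- triple adjoint identity (left):
  have key1 : limp f (rimp (limp f u) f) = limp f u := by
    set a := limp f u with ha
    set b := limp f (rimp a f) with hb
    apply le_antisymm
    · -- b ≤ a
      rw [ha, ← hlimp, hrimp]
      have h1 : u ≤ rimp a f := by rw [← hrimp, hlimp]
      have h2 : rimp a f ≤ rimp b f := by rw [← hrimp, hlimp, ← hb]
      exact h1.trans h2
    · rw [hb, ← hlimp, hrimp]
  -- triple adjoint identity (right):
  have key2 : rimp (limp g (rimp v g)) g = rimp v g := by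
    set c := rimp v g with hcc
    set d := rimp (limp g c) g with hd
    apply le_antisymm
    · -- d ≤ c
      rw [hcc, ← hrimp, hlimp]
      have h1 : v ≤ limp g c := by rw [← hlimp, hrimp]
      have h2 : limp g c ≤ limp g d := by rw [← hlimp, hrimp, ← hd]
      exact h1.trans h2
    · rw [hd, ← hrimp, hlimp]
  refine ⟨by rw [hc], by rw [hc], ?_, key1⟩
  rw [key1, key2, hc]
end

section
/- Composition of bonds is associative and unital: in a unital quantale Q, if b is a bond from f to g and b' a bond from g to h, define b' • b := (g ↙ b) ↘ b'. Then b' • b = b ↙ (b' ↘ g), b' • b is a bond from f to h, f acts as the identity bond on f (i.e., for any bond b : f → g, b • f = b and g • b = b), and • is associative. -/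
/-- Composition of bonds in a unital quantale is well defined, unital and associative. -/
theorem bond_comp_assoc_unital {Q : Type*} [CompleteLattice Q] [Monoid Q]
    (limp rimp : Q → Q → Q)
    (hlimp : ∀ f g h : Q, g * f ≤ h ↔ g ≤ limp h f)
    (hrimp : ∀ f g h : Q, g * f ≤ h ↔ f ≤ rimp g h) :
    -- `IsBond f g b` means `b` is a bond from `f` to `g`
    (∀ f g b : Q, (limp f (rimp b f) = b ∧ rimp (limp g b) g = b) →
      ∀ h b' : Q, (limp g (rimp b' g) = b' ∧ rimp (limp h b') h = b') →
        -- `b' • b = (g ↙ b) ↘ b' = b ↙ (b' ↘ g)` is a bond from `f` to `h`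
        rimp (limp g b) b' = limp b (rimp b' g) ∧
        (limp f (rimp (rimp (limp g b) b') f) = rimp (limp g b) b' ∧
         rimp (limp h (rimp (limp g b) b')) h = rimp (limp g b) b')) ∧
    -- identities: for any bond `b : f → g`, `b • f = b` and `g • b = b`
    (∀ f g b : Q, (limp f (rimp b f) = b ∧ rimp (limp g b) g = b) →
      rimp (limp f f) b = b ∧ rimp (limp g b) g = b) ∧
    -- associativity: for bonds `b : f → g`, `b' : g → h`, `b'' : h → k`
    (∀ f g h k b b' b'' : Q,
      (limp f (rimp b f) = b ∧ rimp (limp g b) g = b) →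
      (limp g (rimp b' g) = b' ∧ rimp (limp h b') h = b') →
      (limp h (rimp b'' h) = b'' ∧ rimp (limp k b'') k = b'') →
      rimp (limp g b) (rimp (limp h b') b'') =
        rimp (limp h (rimp (limp g b) b')) b'') := by
  have ladj : ∀ f g h : Q, g ≤ limp h f ↔ g * f ≤ h := fun f g h => (hlimp f g h).symm
  have radj : ∀ f g h : Q, f ≤ rimp g h ↔ g * f ≤ h := fun f g h => (hrimp f g h).symm
  have cl : ∀ f h : Q, limp h f * f ≤ h := fun f h => (ladj f _ h).1 le_rfl
  have cr : ∀ g h : Q, g * rimp g h ≤ h := fun g h => (radj _ g h).1 le_rfl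
  have mull : ∀ (c : Q) {a b : Q}, a ≤ b → c * a ≤ c * b := by
    intro c a b hab
    exact (radj _ c (c * b)).1 (le_trans hab ((radj b c (c * b)).2 le_rfl))
  have mulr : ∀ (c : Q) {a b : Q}, a ≤ b → a * c ≤ b * c := by
    intro c a b hab
    exact (ladj _ _ (b * c)).1 (le_trans hab ((ladj c b (b * c)).2 le_rfl))
  have ext : ∀ a b : Q, (∀ x, x ≤ a ↔ x ≤ b) → a = b := fun a b H =>
    le_antisymm ((H a).1 le_rfl) ((H b).2 le_rfl)
  have rimp_rimp : ∀ f g h : Q, rimp f (rimp g h) = rimp (g * f) h := by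
    intro f g h
    apply ext; intro x
    simp only [radj, mul_assoc]
  have rimp_limp : ∀ f g h : Q, rimp g (limp h f) = limp (rimp g h) f := by
    intro f g h
    apply ext; intro x
    simp only [radj, ladj, mul_assoc]
  have ge_l : ∀ a f : Q, a ≤ limp f (rimp a f) := fun a f => (ladj _ a f).2 (cr a f)
  have ge_r : ∀ a h : Q, a ≤ rimp (limp h a) h := fun a h => (radj a _ h).2 (cl a h)
  have eq1 : ∀ g b b' : Q, rimp (limp g b) g = b → limp g (rimp b' g) = b' →
      rimp (limp g b) b' = limp b (rimp b' g) := by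
    intro g b b' hb2 hb'1
    conv_lhs => rw [← hb'1]
    rw [rimp_limp, hb2]
  have key1 : ∀ f g b b' : Q, limp f (rimp b f) = b → rimp (limp g b) g = b →
      limp g (rimp b' g) = b' →
      limp f (rimp (rimp (limp g b) b') f) = rimp (limp g b) b' := by
    intro f g b b' hb1 hb2 hb'1
    set c := rimp (limp g b) b' with hc
    have hce : c = limp b (rimp b' g) := eq1 g b b' hb2 hb'1
    refine le_antisymm ?_ (ge_l c f)
    have h1 : c * rimp b' g ≤ b := by
      rw [hce]; exact cl _ _
    have hkey : rimp b' g * rimp b f ≤ rimp c f := by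
      refine (radj _ _ _).2 ?_
      calc c * (rimp b' g * rimp b f) = c * rimp b' g * rimp b f := (mul_assoc _ _ _).symm
        _ ≤ b * rimp b f := mulr _ h1
        _ ≤ f := cr b f
    have final : limp f (rimp c f) * rimp b' g * rimp b f ≤ f :=
      calc limp f (rimp c f) * rimp b' g * rimp b f
          = limp f (rimp c f) * (rimp b' g * rimp b f) := mul_assoc _ _ _
        _ ≤ limp f (rimp c f) * rimp c f := mull _ hkey
        _ ≤ f := cl _ _
    have s2 : limp f (rimp c f) * rimp b' g ≤ b :=
      ((ladj _ _ _).2 final).trans hb1.le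
    exact le_of_le_of_eq ((ladj _ _ _).2 s2) hce.symm
  have key2 : ∀ f g h b b' : Q, limp f (rimp b f) = b → rimp (limp g b) g = b →
      limp g (rimp b' g) = b' → rimp (limp h b') h = b' →
      rimp (limp h (rimp (limp g b) b')) h = rimp (limp g b) b' := by
    intro f g h b b' hb1 hb2 hb'1 hb'2
    set c := rimp (limp g b) b' with hc
    refine le_antisymm ?_ (ge_r c h)
    have h1 : limp g b * c ≤ b' := cr _ _
    have hkey : limp h b' * limp g b ≤ limp h c := by
      refine (ladj _ _ _).2 ?_
      calc limp h b' * limp g b * c = limp h b' * (limp g b * c) := mul_assoc _ _ _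
        _ ≤ limp h b' * b' := mull _ h1
        _ ≤ h := cl _ _
    have final : limp h b' * (limp g b * rimp (limp h c) h) ≤ h :=
      calc limp h b' * (limp g b * rimp (limp h c) h)
          = limp h b' * limp g b * rimp (limp h c) h := (mul_assoc _ _ _).symm
        _ ≤ limp h c * rimp (limp h c) h := mulr _ hkey
        _ ≤ h := cr _ _
    have s2 : limp g b * rimp (limp h c) h ≤ b' :=
      ((radj _ _ _).2 final).trans hb'2.le
    exact le_of_le_of_eq ((radj _ _ _).2 s2) hc.symm
  refine ⟨?_, ?_, ?_⟩
  · rintro f g b ⟨hb1, hb2⟩ h b' ⟨hb'1, hb'2⟩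
    exact ⟨eq1 g b b' hb2 hb'1, key1 f g b b' hb1 hb2 hb'1,
      key2 f g h b b' hb1 hb2 hb'1 hb'2⟩
  · rintro f g b ⟨hb1, hb2⟩
    refine ⟨le_antisymm ?_ ?_, hb2⟩
    · have one_le : (1 : Q) ≤ limp f f := (ladj f 1 f).2 (by rw [one_mul])
      calc rimp (limp f f) b = 1 * rimp (limp f f) b := (one_mul _).symm
        _ ≤ limp f f * rimp (limp f f) b := mulr _ one_le
        _ ≤ b := cr _ _
    · refine (radj _ _ _).2 ?_
      have h2 : limp f f * b ≤ limp f (rimp b f) := by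
        refine (ladj _ _ _).2 ?_
        calc limp f f * b * rimp b f = limp f f * (b * rimp b f) := mul_assoc _ _ _
          _ ≤ limp f f * f := mull _ (cr b f)
          _ ≤ f := cl f f
      exact h2.trans hb1.le
  · rintro f g h k b b' b'' ⟨hb1, hb2⟩ ⟨hb'1, hb'2⟩ ⟨hb''1, hb''2⟩
    have hc2 := key2 f g h b b' hb1 hb2 hb'1 hb'2
    calc rimp (limp g b) (rimp (limp h b') b'')
        = rimp (limp h b' * limp g b) b'' := rimp_rimp _ _ _
      _ = rimp (limp h b' * limp g b) (limp h (rimp b'' h)) := by rw [hb''1]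
      _ = limp (rimp (limp h b' * limp g b) h) (rimp b'' h) := rimp_limp _ _ _
      _ = limp (rimp (limp g b) (rimp (limp h b') h)) (rimp b'' h) := by rw [rimp_rimp]
      _ = limp (rimp (limp g b) b') (rimp b'' h) := by rw [hb'2]
      _ = limp (rimp (limp h (rimp (limp g b) b')) h) (rimp b'' h) := by rw [hc2]
      _ = rimp (limp h (rimp (limp g b) b')) (limp h (rimp b'' h)) := (rimp_limp _ _ _).symm
      _ = rimp (limp h (rimp (limp g b) b')) b'' := by rw [hb''1]
end

section
/- In an MV-algebra (viewed as a commutative integral quantale with residuation →), the set of bonds from x to y equals the up-set {b : x ∨ y ≤ b}, and for bonds b from x to y and b' from y to z, the bond composition satisfies b' • b = (b → y) → b' = (b' → y) → b. -/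
/-- In an MV-algebra (a commutative integral quantale with `(x → y) → y = x ⊔ y`),
the bonds from `x` to `y` are exactly the elements above `x ⊔ y`, and bond composition
satisfies `b' • b = (b → y) → b' = (b' → y) → b`. -/
theorem mv_algebra_bonds {Q : Type*} [CompleteLattice Q] [CommMonoid Q]
    (imp : Q → Q → Q)
    (himp : ∀ x y z : Q, z * x ≤ y ↔ z ≤ imp x y)
    (hintegral : (1 : Q) = ⊤)
    (hmv : ∀ x y : Q, imp (imp x y) y = x ⊔ y)
    (x y z : Q) :
    (∀ b : Q, (imp (imp b x) x = b ∧ imp (imp b y) y = b) ↔ x ⊔ y ≤ b) ∧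
    (∀ b b' : Q, (imp (imp b x) x = b ∧ imp (imp b y) y = b) →
      (imp (imp b' y) y = b' ∧ imp (imp b' z) z = b') →
      imp (imp b y) b' = imp (imp b' y) b) := by
  have curry : ∀ a c d : Q, imp a (imp c d) = imp (c * a) d := by
    intro a c d
    have h : ∀ w : Q, w ≤ imp a (imp c d) ↔ w ≤ imp (c * a) d := by
      intro w
      rw [← himp, ← himp, ← himp, mul_assoc, mul_comm a c]
    exact le_antisymm ((h _).mp le_rfl) ((h _).mpr le_rfl)
  constructor
  · intro b
    constructor
    · rintro ⟨h1, h2⟩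
      have hx : b ⊔ x = b := (hmv b x).symm.trans h1
      have hy : b ⊔ y = b := (hmv b y).symm.trans h2
      exact sup_le (le_sup_right.trans hx.le) (le_sup_right.trans hy.le)
    · intro h
      constructor
      · rw [hmv]; exact sup_eq_left.mpr ((le_sup_left.trans h))
      · rw [hmv]; exact sup_eq_left.mpr ((le_sup_right.trans h))
  · rintro b b' ⟨_, hb⟩ ⟨hb', _⟩
    conv_lhs => rw [← hb']
    conv_rhs => rw [← hb]
    rw [curry, curry, mul_comm]
end

section
/- In the Lawvere quantale ([0,∞] with reversed order and addition, where x → y = max{0, y − x}), the set of bonds from x to y is: the interval [0, min{x,y}] if both x, y < ∞; the two-element set {0, ∞} if x = y = ∞; and {0} otherwise. -/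
open scoped ENNReal

lemma aux_fin (x b : ℝ≥0∞) (hx : x ≠ ⊤) : x - (x - b) = b ↔ b ≤ x := by
  constructor
  · intro h
    rw [← h]; exact tsub_le_self
  · intro h
    exact ENNReal.sub_sub_cancel hx h

lemma aux_top (b : ℝ≥0∞) : (⊤ : ℝ≥0∞) - (⊤ - b) = b ↔ (b = 0 ∨ b = ⊤) := by
  rcases eq_or_ne b ⊤ with rfl | hb
  · simp
  · rw [ENNReal.top_sub hb]
    simp [eq_comm, hb]

/-- Bonds in the Lawvere quantale `([0,∞]ᵒᵖ, +)`, where `x → y = max {0, y - x}`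
is truncated subtraction `y - x` on `ℝ≥0∞`: for `x, y < ∞` the bonds from `x` to `y`
are `[0, min {x, y}]`; for `x = y = ∞` they are `{0, ∞}`; otherwise only `0`. -/
theorem lawvere_quantale_bonds (x y b : ℝ≥0∞) :
    ((x ≠ ⊤ ∧ y ≠ ⊤) →
      ((x - (x - b) = b ∧ y - (y - b) = b) ↔ b ≤ min x y)) ∧
    ((x = ⊤ ∧ y = ⊤) →
      ((x - (x - b) = b ∧ y - (y - b) = b) ↔ (b = 0 ∨ b = ⊤))) ∧
    (¬(x ≠ ⊤ ∧ y ≠ ⊤) → ¬(x = ⊤ ∧ y = ⊤) →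
      ((x - (x - b) = b ∧ y - (y - b) = b) ↔ b = 0)) := by
  refine ⟨?_, ?_, ?_⟩
  · rintro ⟨hx, hy⟩
    rw [aux_fin x b hx, aux_fin y b hy, le_min_iff]
  · rintro ⟨rfl, rfl⟩
    rw [aux_top b]
    tauto
  · intro h1 h2
    rcases eq_or_ne x ⊤ with rfl | hx
    · have hy : y ≠ ⊤ := fun hy => h2 ⟨rfl, hy⟩
      rw [aux_top b, aux_fin y b hy]
      constructor
      · rintro ⟨h0 | h0, hb⟩
        · exact h0
        · exact absurd (h0 ▸ hb) (by simp [hy])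
      · rintro rfl; simp
    · have hy : y = ⊤ := by
        by_contra hy; exact h1 ⟨hx, hy⟩
      subst hy
      rw [aux_fin x b hx, aux_top b]
      constructor
      · rintro ⟨hb, h0 | h0⟩
        · exact h0
        · exact absurd (h0 ▸ hb) (by simp [hx])
      · rintro rfl; simp
end

section
/- In the unit interval [0,1] with the Łukasiewicz t-norm x * y = max{0, x + y − 1} and residuation x → y = min{1, 1 − x + y}, the set of bonds from x to y is the interval [max{x,y}, 1], and for bonds b : x → y, b' : y → z the bond composition is b' • b = min{1, b + b' − y}. -/
private lemma luk_key (c b : ℝ) (hc : 0 ≤ c) (hc1 : c ≤ 1) :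
    min 1 (1 - min 1 (1 - b + c) + c) = b ↔ c ≤ b ∧ b ≤ 1 := by
  constructor
  · intro h
    rcases le_total 1 (1 - b + c) with h1 | h1
    · rw [min_eq_left h1] at h
      have : min 1 c = b := by simpa using h
      rw [min_eq_right hc1] at this
      constructor <;> linarith
    · rw [min_eq_right h1] at h
      have : min 1 b = b := by
        convert h using 2; ring
      rcases le_total (1:ℝ) b with hb | hb
      · rw [min_eq_left hb] at this; constructor <;> linarith
      · constructor <;> linarith
  · rintro ⟨h1, h2⟩
    rw [min_eq_right (show (1:ℝ) - b + c ≤ 1 by linarith)]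
    have : (1 : ℝ) - (1 - b + c) + c = b := by ring
    rw [this, min_eq_right h2]

/-- Bonds and bond composition in the Łukasiewicz quantale on `[0,1]`:
with `a → c = min 1 (1 - a + c)`, the bonds from `x` to `y` form `[max {x, y}, 1]`,
and for bonds `b : x → y`, `b' : y → z` the composition `(b → y) → b'`
equals `min 1 (b + b' - y)`. -/
theorem lukasiewicz_bonds
    (L : ℝ → ℝ → ℝ) (hL : ∀ a c : ℝ, L a c = min 1 (1 - a + c)) :
    (∀ x y b : ℝ, x ∈ Set.Icc (0:ℝ) 1 → y ∈ Set.Icc (0:ℝ) 1 → b ∈ Set.Icc (0:ℝ) 1 →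
      ((L (L b x) x = b ∧ L (L b y) y = b) ↔ max x y ≤ b)) ∧
    (∀ x y z b b' : ℝ, x ∈ Set.Icc (0:ℝ) 1 → y ∈ Set.Icc (0:ℝ) 1 → z ∈ Set.Icc (0:ℝ) 1 →
      (L (L b x) x = b ∧ L (L b y) y = b) →
      (L (L b' y) y = b' ∧ L (L b' z) z = b') →
      L (L b y) b' = min 1 (b + b' - y)) := by
  constructor
  · intro x y b hx hy hb
    simp only [hL]
    rw [luk_key x b hx.1 hx.2, luk_key y b hy.1 hy.2, max_le_iff]
    constructor
    · rintro ⟨⟨h1, _⟩, ⟨h2, _⟩⟩; exact ⟨h1, h2⟩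
    · rintro ⟨h1, h2⟩; exact ⟨⟨h1, hb.2⟩, ⟨h2, hb.2⟩⟩
  · intro x y z b b' hx hy hz hb hb'
    simp only [hL] at hb hb' ⊢
    have h1 := (luk_key y b hy.1 hy.2).mp hb.2
    have h2 := (luk_key y b' hy.1 hy.2).mp hb'.1
    rw [min_eq_right (show (1:ℝ) - b + y ≤ 1 by linarith [h1.1])]
    have e : (1:ℝ) - (1 - b + y) + b' = b + b' - y := by ring
    rw [e]
end

section
/- Reduction of formal contexts (object side): let R ⊆ A × B be a relation and A' ⊆ A. Suppose that for every subset U ⊆ A there exists U' ⊆ A' with R↑(U) = R'↑(U'), where R' = R ∩ (A' × B) and R'↑(U') = {y ∈ B | ∀x ∈ U', (x,y) ∈ R}. Then the map sending a closed set V ∈ M(R') (i.e., V ⊆ A' with R'↓ R'↑ V = V) to R↓ R↑ applied to V (viewing V as a subset of A) is an order isomorphism from M(R') onto M(R), with inverse given by U ↦ U ∩ A'. -/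
/-- Reduction of formal contexts on the object side: if every `R↑ U` can be realized
as `R'↑ U'` for some `U' ⊆ A'`, then `V ↦ R↓ R↑ V` is an order isomorphism from
`M(R')` onto `M(R)` with inverse `U ↦ U ∩ A'`. Here, for `V ⊆ A'`,
`R'↓ R'↑ V = (R↓ R↑ V) ∩ A'`. -/
theorem formal_context_object_reduction {A B : Type*} (R : A → B → Prop) (A' : Set A)
    (up : Set A → Set B) (hup : ∀ U : Set A, up U = {y | ∀ x ∈ U, R x y})
    (down : Set B → Set A) (hdown : ∀ V : Set B, down V = {x | ∀ y ∈ V, R x y})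
    (hred : ∀ U : Set A, ∃ U' : Set A, U' ⊆ A' ∧ up U = up U') :
    -- the map lands in `M(R)` and `U ↦ U ∩ A'` is a left inverse:
    (∀ V : Set A, V ⊆ A' → down (up V) ∩ A' = V →
      (down (up (down (up V))) = down (up V) ∧ down (up V) ∩ A' = V)) ∧
    -- `U ↦ U ∩ A'` lands in `M(R')` and the map is a right inverse:
    (∀ U : Set A, down (up U) = U →
      (U ∩ A' ⊆ A' ∧ down (up (U ∩ A')) ∩ A' = U ∩ A' ∧ down (up (U ∩ A')) = U)) ∧
    -- the map is an order isomorphism: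
    (∀ V W : Set A, V ⊆ A' → down (up V) ∩ A' = V → W ⊆ A' → down (up W) ∩ A' = W →
      (V ⊆ W ↔ down (up V) ⊆ down (up W))) := by
  -- basic Galois connection facts
  have upA : ∀ {U V : Set A}, U ⊆ V → up V ⊆ up U := by
    intro U V h y hy
    rw [hup] at hy ⊢
    exact fun x hx => hy x (h hx)
  have downA : ∀ {U V : Set B}, U ⊆ V → down V ⊆ down U := by
    intro U V h x hx
    rw [hdown] at hx ⊢
    exact fun y hy => hx y (h hy)
  have sub : ∀ U : Set A, U ⊆ down (up U) := by
    intro U x hx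
    rw [hdown]
    intro y hy
    rw [hup] at hy
    exact hy x hx
  have upsub : ∀ V : Set B, V ⊆ up (down V) := by
    intro V y hy
    rw [hup]
    intro x hx
    rw [hdown] at hx
    exact hx y hy
  have upde : ∀ U : Set A, up (down (up U)) = up U := by
    intro U
    exact Set.Subset.antisymm (upA (sub U)) (upsub (up U))
  have closure : ∀ U : Set A, down (up (down (up U))) = down (up U) := by
    intro U; rw [upde U]
  refine ⟨fun V hV hV' => ⟨closure V, hV'⟩, fun U hU => ?_, fun V W hV hVc hW hWc => ?_⟩
  · obtain ⟨U', hU'A, hUU'⟩ := hred U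
    have hU'U : U' ⊆ U := by
      calc U' ⊆ down (up U') := sub U'
        _ = down (up U) := by rw [hUU']
        _ = U := hU
    have hupeq : up (U ∩ A') = up U := by
      apply Set.Subset.antisymm
      · calc up (U ∩ A') ⊆ up U' := upA (fun x hx => ⟨hU'U hx, hU'A hx⟩)
          _ = up U := hUU'.symm
      · exact upA Set.inter_subset_left
    refine ⟨Set.inter_subset_right, ?_, ?_⟩
    · rw [hupeq, hU]
    · rw [hupeq, hU]
  · constructor
    · intro h
      exact downA (upA h)
    · intro h
      calc V = down (up V) ∩ A' := hVc.symm
        _ ⊆ down (up W) ∩ A' := Set.inter_subset_inter_left _ h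
        _ = W := hWc
end
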